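/- If M = M_1 + M_2 where M_1 and M_2 are g-radical supplemented modules, then M is g-radical supplemented. -/
import Mathlib


variable {R : Type*} [Ring R] {M : Type*} [AddCommGroup M] [Module R M]

/-- `T` is an essential submodule of `M`. -/
def IsEssentialSub (T : Submodule R M) : Prop :=
  ∀ L : Submodule R M, L ≠ ⊥ → T ⊓ L ≠ ⊥

/-- `K` is a generalized small submodule of `M`. -/
def GSmall (K : Submodule R M) : Prop :=
  ∀ T : Submodule R M, IsEssentialSub T → K ⊔ T = ⊤ → T = ⊤

/-- `T` is an essential submodule of the submodule `N`. -/
def EssIn (T N : Submodule R M) : Prop :=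
  T ≤ N ∧ ∀ L : Submodule R M, L ≤ N → L ≠ ⊥ → T ⊓ L ≠ ⊥

/-- `K` is a generalized small submodule of the submodule `N`. -/
def GSmallIn (K N : Submodule R M) : Prop :=
  K ≤ N ∧ ∀ T : Submodule R M, EssIn T N → K ⊔ T = N → T = N

/-- `T` is a maximal essential submodule of the submodule `N`. -/
def MaxEssIn (T N : Submodule R M) : Prop :=
  EssIn T N ∧ T < N ∧ ∀ S : Submodule R M, T < S → S ≤ N → S = N

/-- The generalized radical of the submodule `N`, as a submodule of `M`:
the intersection of all maximal essential submodules of `N` (equal to `N` if none exist). -/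
def RadgIn (N : Submodule R M) : Submodule R M :=
  sInf {T : Submodule R M | MaxEssIn T N} ⊓ N

/-- The generalized radical of the module `M`: the intersection of all maximal essential
submodules of `M` (equal to `M` if none exist). -/
def Radg (R M : Type*) [Ring R] [AddCommGroup M] [Module R M] : Submodule R M :=
  sInf {T : Submodule R M | IsEssentialSub T ∧ IsCoatom T}

/-- `V` is a g-radical supplement of `U` in the submodule `N` (with `N = ⊤` for `M` itself). -/
def GRadSuppIn (U V N : Submodule R M) : Prop :=
  U ⊔ V = N ∧ U ⊓ V ≤ RadgIn V

/-- `M` is a g-radical supplemented module. -/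
def GRS (R M : Type*) [Ring R] [AddCommGroup M] [Module R M] : Prop :=
  ∀ U : Submodule R M, ∃ V : Submodule R M, U ⊔ V = ⊤ ∧ U ⊓ V ≤ RadgIn V

lemma radgIn_le (N : Submodule R M) : RadgIn N ≤ N := by
  unfold RadgIn; exact inf_le_right

lemma gsmallin_of_le {K A B : Submodule R M} (h : GSmallIn K A) (hAB : A ≤ B) :
    GSmallIn K B := by
  refine ⟨h.1.trans hAB, fun T hT hKT => ?_⟩
  have hess : EssIn (A ⊓ T) A := by
    refine ⟨inf_le_left, fun L hLA hL hb => ?_⟩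
    refine hT.2 L (hLA.trans hAB) hL ?_
    have e : (A ⊓ T) ⊓ L = T ⊓ L := by
      rw [inf_assoc]
      exact inf_eq_right.mpr (inf_le_right.trans hLA)
    rw [← e, hb]
  have hmod : K ⊔ (A ⊓ T) = A := by
    rw [inf_comm A T, ← sup_inf_assoc_of_le T h.1, hKT, inf_eq_right.mpr hAB]
  have hAT : A ≤ T := by
    have h3 := h.2 (A ⊓ T) hess hmod
    rw [← h3]; exact inf_le_right
  rw [← hKT]
  exact (sup_eq_right.mpr (h.1.trans hAT)).symm

lemma gsmallin_le_radgIn {K N : Submodule R M} (h : GSmallIn K N) : K ≤ RadgIn N := by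
  unfold RadgIn
  refine le_inf (le_sInf fun T hT => ?_) h.1
  by_contra hKT
  have h1 : T < K ⊔ T := lt_of_le_of_ne le_sup_right
    (fun e => hKT (e ▸ le_sup_left))
  have h2 : K ⊔ T = N := hT.2.2 _ h1 (sup_le h.1 hT.1.1)
  have h3 : T = N := h.2 T hT.1 h2
  exact absurd h3 (ne_of_lt hT.2.1)

lemma mem_radgIn_gsmall {N : Submodule R M} {x : M} (hx : x ∈ RadgIn N) :
    GSmallIn (Submodule.span R {x}) N := by
  unfold RadgIn at hx
  obtain ⟨hx1, hxN⟩ := Submodule.mem_inf.mp hx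
  refine ⟨(Submodule.span_singleton_le_iff_mem x N).mpr hxN, fun T hT hsupT => ?_⟩
  by_contra hTN
  have hxT : x ∉ T := fun hxT => hTN (by
    rw [← hsupT, sup_eq_right.mpr ((Submodule.span_singleton_le_iff_mem x T).mpr hxT)])
  set s : Set (Submodule R M) := {S | T ≤ S ∧ S ≤ N ∧ x ∉ S} with hs
  obtain ⟨m, hTm, hm⟩ := zorn_le_nonempty₀ s
    (fun c hcs hc y hy => by
      refine ⟨sSup c, ⟨(hcs hy).1.trans (le_sSup hy), sSup_le fun z hz => (hcs hz).2.1, ?_⟩,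
        fun z hz => le_sSup hz⟩
      intro hxs
      obtain ⟨p, hp, hxp⟩ := (Submodule.mem_sSup_of_directed ⟨y, hy⟩ hc.directedOn).mp hxs
      exact (hcs hp).2.2 hxp)
    T ⟨le_rfl, hT.1, hxT⟩
  obtain ⟨hTm', hmN, hxm⟩ := hm.prop
  have hmax : MaxEssIn m N := by
    refine ⟨⟨hmN, fun L hLN hL hb => hT.2 L hLN hL
      (le_bot_iff.mp (hb ▸ inf_le_inf_right L hTm'))⟩,
      lt_of_le_of_ne hmN (fun e => hxm (e ▸ hxN)), fun S hmS hSN => ?_⟩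
    have hxS : x ∈ S := by
      by_contra hxS
      exact absurd (hm.2 ⟨hTm'.trans hmS.le, hSN, hxS⟩ hmS.le) (not_le_of_gt hmS)
    refine le_antisymm hSN ?_
    rw [← hsupT]
    exact sup_le ((Submodule.span_singleton_le_iff_mem x S).mpr hxS) (hTm'.trans hmS.le)
  exact hxm (Submodule.mem_sInf.mp hx1 m hmax)

lemma radgIn_mono {A B : Submodule R M} (h : A ≤ B) : RadgIn A ≤ RadgIn B := fun x hx =>
  gsmallin_le_radgIn (gsmallin_of_le (mem_radgIn_gsmall hx) h)
    (Submodule.mem_span_singleton_self x)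

lemma map_radgIn_le (X : Submodule R M) (V' : Submodule R ↥X) :
    Submodule.map X.subtype (RadgIn V') ≤ RadgIn (Submodule.map X.subtype V') := by
  have hinj : Function.Injective X.subtype := X.injective_subtype
  unfold RadgIn
  refine le_inf (le_sInf fun T hT => ?_) (Submodule.map_mono (radgIn_le V'))
  set T' := Submodule.comap X.subtype T with hT'def
  have hTV : T ≤ Submodule.map X.subtype V' := hT.1.1
  have hmapT' : Submodule.map X.subtype T' = T := by
    rw [hT'def, Submodule.map_comap_subtype]
    exact inf_eq_right.mpr (hTV.trans (Submodule.map_subtype_le X V'))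
  have hT'V' : T' ≤ V' := by
    rw [hT'def, ← Submodule.comap_map_eq_of_injective hinj V']
    exact Submodule.comap_mono hTV
  have hmax : MaxEssIn T' V' := by
    refine ⟨⟨hT'V', fun L hLV hL hb => ?_⟩, ?_, ?_⟩
    · refine hT.1.2 (Submodule.map X.subtype L) (Submodule.map_mono hLV)
        (fun hb2 => hL (Submodule.map_injective_of_injective hinj
          (by rw [hb2, Submodule.map_bot]))) ?_
      rw [← hmapT', ← Submodule.map_inf _ hinj, hb, Submodule.map_bot]
    · refine lt_of_le_of_ne hT'V' fun e => ?_
      exact absurd (by rw [← hmapT', e] : T = Submodule.map X.subtype V') (ne_of_lt hT.2.1)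
    · intro S' hS'lt hS'le
      have h1 : T < Submodule.map X.subtype S' := by
        rw [← hmapT']
        exact lt_of_le_of_ne (Submodule.map_mono hS'lt.le)
          (fun e => (ne_of_lt hS'lt) (Submodule.map_injective_of_injective hinj e))
      exact Submodule.map_injective_of_injective hinj
        (hT.2.2 _ h1 (Submodule.map_mono hS'le))
  have h2 : RadgIn V' ≤ T' := by
    unfold RadgIn
    exact inf_le_left.trans (sInf_le hmax)
  exact (Submodule.map_mono h2).trans (le_of_eq hmapT')

lemma key_lemma (X : Submodule R M) (hX : GRS R ↥X) (N : Submodule R M)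
    (hXN : N ⊔ X = ⊤) :
    ∃ V : Submodule R M, V ≤ X ∧ N ⊔ V = ⊤ ∧ N ⊓ V ≤ RadgIn V := by
  have hinj : Function.Injective X.subtype := X.injective_subtype
  obtain ⟨V', hV'1, hV'2⟩ := hX (Submodule.comap X.subtype (N ⊓ X))
  set U' := Submodule.comap X.subtype (N ⊓ X) with hU'def
  set V := Submodule.map X.subtype V' with hVdef
  have hVX : V ≤ X := Submodule.map_subtype_le X V'
  have hmapU : Submodule.map X.subtype U' = N ⊓ X := by
    rw [hU'def, Submodule.map_comap_subtype]
    exact inf_eq_right.mpr inf_le_right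
  have hsup : (N ⊓ X) ⊔ V = X := by
    rw [← hmapU, hVdef, ← Submodule.map_sup, hV'1, Submodule.map_top,
      Submodule.range_subtype]
  refine ⟨V, hVX, ?_, ?_⟩
  · have h : N ⊔ ((N ⊓ X) ⊔ V) = ⊤ := by rw [hsup]; exact hXN
    rwa [← sup_assoc, sup_inf_self] at h
  · have h1 : N ⊓ V = Submodule.map X.subtype (U' ⊓ V') :=
      calc N ⊓ V = N ⊓ (X ⊓ V) := by rw [inf_eq_right.mpr hVX]
        _ = (N ⊓ X) ⊓ V := (inf_assoc N X V).symm
        _ = Submodule.map X.subtype U' ⊓ Submodule.map X.subtype V' := by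
            rw [hmapU, hVdef]
        _ = Submodule.map X.subtype (U' ⊓ V') := (Submodule.map_inf _ hinj).symm
    rw [h1]
    exact (Submodule.map_mono hV'2).trans (map_radgIn_le X V')

theorem stmt14 (M₁ M₂ : Submodule R M) (hsum : M₁ ⊔ M₂ = ⊤)
    (h1 : GRS R ↥M₁) (h2 : GRS R ↥M₂) : GRS R M := by
  intro U
  obtain ⟨V₂, hV₂X, hV₂sup, hV₂inf⟩ := key_lemma M₂ h2 (U ⊔ M₁)
    (by rw [sup_assoc, hsum, sup_top_eq])
  obtain ⟨V₁, hV₁X, hV₁sup, hV₁inf⟩ := key_lemma M₁ h1 (U ⊔ V₂)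
    (by rw [sup_right_comm]; exact hV₂sup)
  refine ⟨V₁ ⊔ V₂, ?_, ?_⟩
  · rw [sup_comm V₁ V₂, ← sup_assoc]
    exact hV₁sup
  · intro x hx
    obtain ⟨hxU, hxV⟩ := Submodule.mem_inf.mp hx
    obtain ⟨v₁, hv₁, v₂, hv₂, rfl⟩ := Submodule.mem_sup.mp hxV
    have e1 : v₁ = (v₁ + v₂) - v₂ := by abel
    have e2 : v₂ = (v₁ + v₂) - v₁ := by abel
    have h1 : v₁ ∈ (U ⊔ V₂) ⊓ V₁ := by
      refine Submodule.mem_inf.mpr ⟨?_, hv₁⟩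
      rw [e1]
      exact Submodule.sub_mem _ (Submodule.mem_sup_left hxU) (Submodule.mem_sup_right hv₂)
    have h2 : v₂ ∈ (U ⊔ V₁) ⊓ V₂ := by
      refine Submodule.mem_inf.mpr ⟨?_, hv₂⟩
      rw [e2]
      exact Submodule.sub_mem _ (Submodule.mem_sup_left hxU) (Submodule.mem_sup_right hv₁)
    have g1 : v₁ ∈ RadgIn (V₁ ⊔ V₂) := radgIn_mono le_sup_left (hV₁inf h1)
    have g2 : v₂ ∈ RadgIn (V₁ ⊔ V₂) := by
      refine radgIn_mono le_sup_right (hV₂inf ?_)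
      exact inf_le_inf_right V₂ (sup_le_sup_left hV₁X U) h2
    exact Submodule.add_mem _ g1 g2
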